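/- arXiv:2210.16592 — 4 statements merged into one kernel-verified Lean document; each statement's English description precedes it below -/
import Mathlib

section
/- Let W̃_1, …, W̃_K, R̃ ∈ ℂ^{M×M} be Hermitian positive semidefinite, let h_1, …, h_K ∈ ℂ^M with h_k^H W̃_k h_k > 0 for all k, and define w*_k = (h_k^H W̃_k h_k)^{-1/2} W̃_k h_k, W*_k = w*_k (w*_k)^H, and R* = R̃ + Σ_{k=1}^K (W̃_k − W*_k). Then R* is Hermitian positive semidefinite, and Σ_{k=1}^K W*_k + R* = Σ_{k=1}^K W̃_k + R̃; consequently Σ_k tr(W*_k) + tr(R*) = Σ_k tr(W̃_k) + tr(R̃). -/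
open Matrix ComplexOrder

private lemma cs_dot {M : ℕ} (u v : Fin M → ℂ) :
    Complex.normSq (star u ⬝ᵥ v) ≤ (star u ⬝ᵥ u).re * (star v ⬝ᵥ v).re := by
  have h1 : star u ⬝ᵥ v = @inner ℂ (EuclideanSpace ℂ (Fin M)) _
      ((WithLp.equiv 2 _).symm u) ((WithLp.equiv 2 _).symm v) :=
    by rw [dotProduct_comm]; rfl
  have h2 : star u ⬝ᵥ u = @inner ℂ (EuclideanSpace ℂ (Fin M)) _
      ((WithLp.equiv 2 _).symm u) ((WithLp.equiv 2 _).symm u) :=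
    by rw [dotProduct_comm]; rfl
  have h3 : star v ⬝ᵥ v = @inner ℂ (EuclideanSpace ℂ (Fin M)) _
      ((WithLp.equiv 2 _).symm v) ((WithLp.equiv 2 _).symm v) :=
    by rw [dotProduct_comm]; rfl
  set u' : EuclideanSpace ℂ (Fin M) := (WithLp.equiv 2 _).symm u
  set v' : EuclideanSpace ℂ (Fin M) := (WithLp.equiv 2 _).symm v
  rw [h1, h2, h3]
  have hcs : ‖@inner ℂ (EuclideanSpace ℂ (Fin M)) _ u' v'‖ ≤ ‖u'‖ * ‖v'‖ :=
    norm_inner_le_norm u' v'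
  have hmul := mul_self_le_mul_self (norm_nonneg _) hcs
  have e1 : RCLike.re (@inner ℂ (EuclideanSpace ℂ (Fin M)) _ u' u') = ‖u'‖ ^ 2 :=
    inner_self_eq_norm_sq u'
  have e2 : RCLike.re (@inner ℂ (EuclideanSpace ℂ (Fin M)) _ v' v') = ‖v'‖ ^ 2 :=
    inner_self_eq_norm_sq v'
  simp only [RCLike.re_to_complex] at e1 e2
  calc Complex.normSq (@inner ℂ (EuclideanSpace ℂ (Fin M)) _ u' v')
      = ‖@inner ℂ (EuclideanSpace ℂ (Fin M)) _ u' v'‖ *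
        ‖@inner ℂ (EuclideanSpace ℂ (Fin M)) _ u' v'‖ := by
        simp [Complex.normSq_eq_norm_sq, sq]
    _ ≤ (‖u'‖ * ‖v'‖) * (‖u'‖ * ‖v'‖) := hmul
    _ = (‖u'‖ ^ 2) * (‖v'‖ ^ 2) := by ring
    _ = (@inner ℂ (EuclideanSpace ℂ (Fin M)) _ u' u').re *
        (@inner ℂ (EuclideanSpace ℂ (Fin M)) _ v' v').re := by rw [e1, e2]

open scoped MatrixOrder in
private lemma key_psd {M : ℕ} (A : Matrix (Fin M) (Fin M) ℂ) (h : Fin M → ℂ)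
    (hA : A.PosSemidef) (hpos : 0 < star h ⬝ᵥ A *ᵥ h) :
    (A - vecMulVec ((((Real.sqrt ((star h ⬝ᵥ A *ᵥ h).re))⁻¹ : ℝ) : ℂ) • (A *ᵥ h))
      (star ((((Real.sqrt ((star h ⬝ᵥ A *ᵥ h).re))⁻¹ : ℝ) : ℂ) • (A *ᵥ h)))).PosSemidef := by
  set c : ℝ := (star h ⬝ᵥ A *ᵥ h).re with hc
  have hcpos : 0 < c := (Complex.lt_def.mp hpos).1
  set r : ℝ := (Real.sqrt c)⁻¹ with hrdef
  set w : Fin M → ℂ := ((r : ℝ) : ℂ) • (A *ᵥ h) with hwdef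
  have hr2 : r * r * c = 1 := by
    rw [hrdef, ← mul_inv, Real.mul_self_sqrt hcpos.le]
    exact inv_mul_cancel₀ hcpos.ne'
  -- square root decomposition
  set B : Matrix (Fin M) (Fin M) ℂ := CFC.sqrt A with hBdef
  have hBH : Bᴴ = B := (CFC.sqrt_nonneg A).posSemidef.isHermitian
  have hBB : Bᴴ * B = A := by rw [hBH, hBdef, CFC.sqrt_mul_sqrt_self A hA.nonneg]
  have key : ∀ x y : Fin M → ℂ, star x ⬝ᵥ A *ᵥ y = star (B *ᵥ x) ⬝ᵥ (B *ᵥ y) := by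
    intro x y
    rw [← hBB, ← mulVec_mulVec, dotProduct_mulVec, star_mulVec]
  refine PosSemidef.of_dotProduct_mulVec_nonneg ?_ ?_
  · -- Hermitian
    have hWst : (vecMulVec w (star w)).IsHermitian := by
      ext i j
      simp [Matrix.conjTranspose_apply, vecMulVec_apply, mul_comm]
    exact hA.isHermitian.sub hWst
  · intro x
    rw [sub_mulVec, dotProduct_sub]
    have hmv : vecMulVec w (star w) *ᵥ x = (star w ⬝ᵥ x) • w := by
      ext i
      simp [vecMulVec_apply, mulVec, dotProduct, Finset.sum_mul, mul_comm, mul_assoc,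
        mul_left_comm]
    set t : ℂ := star x ⬝ᵥ w with htdef
    have hst : star w ⬝ᵥ x = star t := by
      rw [htdef]
      simp [dotProduct, Finset.sum_comm, mul_comm]
    have hq : star x ⬝ᵥ vecMulVec w (star w) *ᵥ x = (Complex.normSq t : ℂ) := by
      rw [hmv, dotProduct_smul, hst, smul_eq_mul]
      rw [show star t = (starRingEnd ℂ) t from rfl, ← Complex.normSq_eq_conj_mul_self]
    rw [hq]
    set s : ℂ := star x ⬝ᵥ A *ᵥ x with hsdef
    have hs0 : 0 ≤ s := hA.dotProduct_mulVec_nonneg x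
    have hsim : s.im = 0 := ((Complex.le_def.mp hs0).2).symm
    have hsre : 0 ≤ s.re := (Complex.le_def.mp hs0).1
    set d : ℂ := star x ⬝ᵥ A *ᵥ h with hddef
    have htd : t = (r : ℂ) * d := by
      rw [htdef, hwdef, dotProduct_smul, smul_eq_mul, hddef]
    have hnt : Complex.normSq t = r * r * Complex.normSq d := by
      rw [htd, Complex.normSq_mul, Complex.normSq_ofReal]
    have hcs : Complex.normSq d ≤ s.re * c := by
      have := cs_dot (B *ᵥ x) (B *ᵥ h)
      rw [← key x x, ← key h h, ← key x h] at this
      exact this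
    have hns : Complex.normSq t ≤ s.re := by
      nlinarith [Complex.normSq_nonneg d, mul_pos hcpos hcpos]
    rw [Complex.le_def]
    constructor
    · simpa using hns
    · simp [hsim]

/-- Covariance-reconstruction step of Proposition 1: with
`w*ₖ = (hₖᴴ W̃ₖ hₖ)^{-1/2} W̃ₖ hₖ`, `W*ₖ = w*ₖ (w*ₖ)ᴴ`, and
`R* = R̃ + Σₖ (W̃ₖ − W*ₖ)`, the matrix `R*` is PSD, the total covariance is
preserved, and consequently the total transmit power is preserved. -/
theorem reconstruction_preserves_covariance {M K : ℕ}
    (W : Fin K → Matrix (Fin M) (Fin M) ℂ) (R : Matrix (Fin M) (Fin M) ℂ)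
    (h : Fin K → Fin M → ℂ)
    (hW : ∀ k, (W k).PosSemidef) (hR : R.PosSemidef)
    (hpos : ∀ k, 0 < star (h k) ⬝ᵥ W k *ᵥ h k) :
    let w : Fin K → Fin M → ℂ := fun k =>
      (((Real.sqrt ((star (h k) ⬝ᵥ W k *ᵥ h k).re))⁻¹ : ℝ) : ℂ) • (W k *ᵥ h k)
    let Wstar : Fin K → Matrix (Fin M) (Fin M) ℂ := fun k => vecMulVec (w k) (star (w k))
    let Rstar : Matrix (Fin M) (Fin M) ℂ := R + ∑ k, (W k - Wstar k)
    Rstar.PosSemidef ∧ (∑ k, Wstar k) + Rstar = (∑ k, W k) + R ∧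
      (∑ k, (Wstar k).trace) + Rstar.trace = (∑ k, (W k).trace) + R.trace := by
  intro w Wstar Rstar
  have hdiff : ∀ k, (W k - Wstar k).PosSemidef := fun k => key_psd (W k) (h k) (hW k) (hpos k)
  have hsum : (∑ k, (W k - Wstar k)).PosSemidef := by
    classical
    exact Finset.sum_induction _ _ (fun a b ha hb => ha.add hb) Matrix.PosSemidef.zero
      (fun k _ => hdiff k)
  have h1 : Rstar.PosSemidef := hR.add hsum
  have h2 : (∑ k, Wstar k) + Rstar = (∑ k, W k) + R := by
    show (∑ k, Wstar k) + (R + ∑ k, (W k - Wstar k)) = (∑ k, W k) + R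
    rw [Finset.sum_sub_distrib]
    abel
  refine ⟨h1, h2, ?_⟩
  have := congrArg Matrix.trace h2
  simpa [Matrix.trace_add, Matrix.trace_sum] using this
end

section
/- Let h_1, …, h_K ∈ ℂ^M, Γ_1, …, Γ_K > 0, σ_1², …, σ_K² > 0, and let W̃_1, …, W̃_K, R̃ ∈ ℂ^{M×M} be Hermitian positive semidefinite satisfying for every k the Type-I SINR constraint (1/Γ_k) h_k^H W̃_k h_k − Σ_{i≠k} h_k^H W̃_i h_k − h_k^H R̃ h_k ≥ σ_k². Define w*_k = (h_k^H W̃_k h_k)^{-1/2} W̃_k h_k, W*_k = w*_k (w*_k)^H, and R* = R̃ + Σ_{k=1}^K (W̃_k − W*_k). Then for every k the Type-I SINR constraint also holds for (W*_1, …, W*_K, R*): (1/Γ_k) h_k^H W*_k h_k − Σ_{i≠k} h_k^H W*_i h_k − h_k^H R* h_k ≥ σ_k². -/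
open Matrix ComplexOrder

lemma quad_vecMulVec {M : ℕ} (a b x : Fin M → ℂ) :
    star x ⬝ᵥ (vecMulVec a b *ᵥ x) = (star x ⬝ᵥ a) * (b ⬝ᵥ x) := by
  simp only [dotProduct, mulVec, vecMulVec_apply, Finset.mul_sum, Finset.sum_mul]
  rw [Finset.sum_comm]
  apply Finset.sum_congr rfl; intro j _
  apply Finset.sum_congr rfl; intro i _
  ring

lemma sum_mulVec' {M K : ℕ} (A : Fin K → Matrix (Fin M) (Fin M) ℂ) (x : Fin M → ℂ) :
    (∑ i, A i) *ᵥ x = ∑ i, (A i *ᵥ x) := by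
  ext j
  simp only [mulVec, dotProduct, Matrix.sum_apply, Finset.sum_apply, Finset.sum_mul]
  exact Finset.sum_comm

lemma dotProduct_sum' {M K : ℕ} (v : Fin M → ℂ) (f : Fin K → Fin M → ℂ) :
    v ⬝ᵥ (∑ i, f i) = ∑ i, v ⬝ᵥ f i := by
  simp only [dotProduct, Finset.sum_apply, Finset.mul_sum]
  exact Finset.sum_comm

/-- Feasibility preservation in the proof of Proposition 1: the rank-one
reconstruction `(W*₁, …, W*_K, R*)` still satisfies all Type-I SINR constraints. -/
theorem reconstruction_preserves_typeI_sinr {M K : ℕ}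
    (h : Fin K → Fin M → ℂ) (Γ σsq : Fin K → ℝ)
    (hΓ : ∀ k, 0 < Γ k) (hσ : ∀ k, 0 < σsq k)
    (W : Fin K → Matrix (Fin M) (Fin M) ℂ) (R : Matrix (Fin M) (Fin M) ℂ)
    (hW : ∀ k, (W k).PosSemidef) (hR : R.PosSemidef)
    (hSINR : ∀ k, (σsq k : ℂ) ≤ (1 / (Γ k : ℂ)) * (star (h k) ⬝ᵥ W k *ᵥ h k)
        - ∑ i ∈ Finset.univ.erase k, star (h k) ⬝ᵥ W i *ᵥ h k
        - star (h k) ⬝ᵥ R *ᵥ h k) :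
    let w : Fin K → Fin M → ℂ := fun k =>
      (((Real.sqrt ((star (h k) ⬝ᵥ W k *ᵥ h k).re))⁻¹ : ℝ) : ℂ) • (W k *ᵥ h k)
    let Wstar : Fin K → Matrix (Fin M) (Fin M) ℂ := fun k => vecMulVec (w k) (star (w k))
    let Rstar : Matrix (Fin M) (Fin M) ℂ := R + ∑ k, (W k - Wstar k)
    ∀ k, (σsq k : ℂ) ≤ (1 / (Γ k : ℂ)) * (star (h k) ⬝ᵥ Wstar k *ᵥ h k)
        - ∑ i ∈ Finset.univ.erase k, star (h k) ⬝ᵥ Wstar i *ᵥ h k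
        - star (h k) ⬝ᵥ Rstar *ᵥ h k := by
  intro w Wstar Rstar k
  -- Key: the reconstruction preserves the own-signal quadratic form.
  have hkey : star (h k) ⬝ᵥ Wstar k *ᵥ h k = star (h k) ⬝ᵥ W k *ᵥ h k := by
    have hnn : 0 ≤ star (h k) ⬝ᵥ W k *ᵥ h k := (hW k).dotProduct_mulVec_nonneg (h k)
    obtain ⟨hre, him⟩ := Complex.nonneg_iff.mp hnn
    set t : ℝ := (star (h k) ⬝ᵥ W k *ᵥ h k).re with ht
    have hcre : star (h k) ⬝ᵥ W k *ᵥ h k = ((t : ℝ) : ℂ) := by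
      apply Complex.ext <;> simp [← him, ht]
    set α : ℝ := (Real.sqrt t)⁻¹ with hα
    have h1 : star (h k) ⬝ᵥ w k = (α : ℂ) * ((t : ℝ) : ℂ) := by
      show star (h k) ⬝ᵥ ((α : ℂ) • (W k *ᵥ h k)) = _
      rw [dotProduct_smul, smul_eq_mul, hcre]
    have h2 : star (w k) ⬝ᵥ h k = star ((α : ℂ) * ((t : ℝ) : ℂ)) := by
      rw [← h1, ← star_dotProduct]
    have hq : star (h k) ⬝ᵥ Wstar k *ᵥ h k
        = ((α : ℂ) * ((t : ℝ) : ℂ)) * star ((α : ℂ) * ((t : ℝ) : ℂ)) := by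
      rw [show Wstar k = vecMulVec (w k) (star (w k)) from rfl, quad_vecMulVec, h1, h2]
    have hstar : star ((α : ℂ) * ((t : ℝ) : ℂ)) = (α : ℂ) * ((t : ℝ) : ℂ) := by
      simp [Complex.star_def, _root_.map_mul, Complex.conj_ofReal]
    have hr : α * t * (α * t) = t := by
      rcases eq_or_lt_of_le hre with h0 | hpos
      · simp [← h0]
      · have hs : Real.sqrt t * Real.sqrt t = t := Real.mul_self_sqrt hre
        have hsne : Real.sqrt t ≠ 0 := by positivity
        field_simp [hα]
        rw [hα, inv_pow, Real.sq_sqrt hre, inv_mul_cancel₀ hpos.ne']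
    rw [hq, hcre, hstar]
    exact_mod_cast congrArg (fun r : ℝ => (r : ℂ)) hr
  -- Expand the quadratic form at `Rstar`.
  have hRstar : star (h k) ⬝ᵥ Rstar *ᵥ h k
      = star (h k) ⬝ᵥ R *ᵥ h k
        + ∑ i, (star (h k) ⬝ᵥ W i *ᵥ h k - star (h k) ⬝ᵥ Wstar i *ᵥ h k) := by
    rw [show Rstar = R + ∑ i, (W i - Wstar i) from rfl, add_mulVec, dotProduct_add]
    congr 1
    rw [sum_mulVec', dotProduct_sum']
    exact Finset.sum_congr rfl fun i _ => by rw [sub_mulVec, dotProduct_sub]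
  have hsum : ∀ (f : Fin K → ℂ), ∑ i ∈ Finset.univ.erase k, f i = (∑ i, f i) - f k :=
    fun f => Finset.sum_erase_eq_sub (Finset.mem_univ k)
  calc (σsq k : ℂ) ≤ (1 / (Γ k : ℂ)) * (star (h k) ⬝ᵥ W k *ᵥ h k)
        - ∑ i ∈ Finset.univ.erase k, star (h k) ⬝ᵥ W i *ᵥ h k
        - star (h k) ⬝ᵥ R *ᵥ h k := hSINR k
    _ = (1 / (Γ k : ℂ)) * (star (h k) ⬝ᵥ Wstar k *ᵥ h k)
        - ∑ i ∈ Finset.univ.erase k, star (h k) ⬝ᵥ Wstar i *ᵥ h k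
        - star (h k) ⬝ᵥ Rstar *ᵥ h k := by
      rw [hRstar, hkey, hsum (fun i => star (h k) ⬝ᵥ W i *ᵥ h k),
        hsum (fun i => star (h k) ⬝ᵥ Wstar i *ᵥ h k), Finset.sum_sub_distrib, hkey]
      ring
end

section
/- Fix G ∈ ℂ^{N×M}, channel vectors h_1, …, h_K ∈ ℂ^M, SINR thresholds Γ_k > 0, noise powers σ_k² > 0, and power budget P_0 > 0. Define the relaxed feasible set S_SDR as all tuples (W_1, …, W_K, R) of Hermitian positive semidefinite M×M matrices with (1/Γ_k) h_k^H W_k h_k − Σ_{i≠k} h_k^H W_i h_k − h_k^H R h_k ≥ σ_k² for all k and Σ_k tr(W_k) + tr(R) ≤ P_0, and define the rank-constrained feasible set S_1 ⊆ S_SDR as those tuples additionally satisfying rank(W_k) ≤ 1 for all k. Suppose (W̃_1, …, W̃_K, R̃) ∈ S_SDR minimizes f(W_1, …, W_K, R) = tr((G(Σ_k W_k + R)G^H)^{-1}) over S_SDR, where G(Σ_k W̃_k + R̃)G^H is assumed invertible. Then the tuple (W*_1, …, W*_K, R*) with W*_k = w*_k(w*_k)^H, w*_k = (h_k^H W̃_k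 h_k)^{-1/2} W̃_k h_k, and R* = R̃ + Σ_k(W̃_k − W*_k) belongs to S_1 and satisfies f(W*_1, …, W*_K, R*) = f(W̃_1, …, W̃_K, R̃); consequently the infimum of f over S_1 equals the infimum of f over S_SDR. -/
open Matrix ComplexOrder

/-- Relaxed (SDR) feasible set of problem (P1.2) with Type-I receivers: PSD matrices
satisfying the Type-I SINR constraints and the power constraint. -/
def SSDRTypeI {M K : ℕ} (h : Fin K → Fin M → ℂ) (Γ σsq : Fin K → ℝ) (P0 : ℝ) :
    Set ((Fin K → Matrix (Fin M) (Fin M) ℂ) × Matrix (Fin M) (Fin M) ℂ) :=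
  {p | (∀ k, (p.1 k).PosSemidef) ∧ p.2.PosSemidef ∧
    (∀ k, (σsq k : ℂ) ≤ (1 / (Γ k : ℂ)) * (star (h k) ⬝ᵥ p.1 k *ᵥ h k)
      - ∑ i ∈ Finset.univ.erase k, star (h k) ⬝ᵥ p.1 i *ᵥ h k
      - star (h k) ⬝ᵥ p.2 *ᵥ h k) ∧
    (∑ k, (p.1 k).trace) + p.2.trace ≤ (P0 : ℂ)}

/-- Rank-constrained feasible set of problem (P1.2): additionally `rank Wₖ ≤ 1`. -/
def SRankOneTypeI {M K : ℕ} (h : Fin K → Fin M → ℂ) (Γ σsq : Fin K → ℝ) (P0 : ℝ) :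
    Set ((Fin K → Matrix (Fin M) (Fin M) ℂ) × Matrix (Fin M) (Fin M) ℂ) :=
  {p ∈ SSDRTypeI h Γ σsq P0 | ∀ k, (p.1 k).rank ≤ 1}

/-- The CRB-related objective `tr((G (Σₖ Wₖ + R) Gᴴ)⁻¹)` (a real number for the
feasible PSD arguments). -/
noncomputable def crbObj {M N K : ℕ} (G : Matrix (Fin N) (Fin M) ℂ)
    (p : (Fin K → Matrix (Fin M) (Fin M) ℂ) × Matrix (Fin M) (Fin M) ℂ) : ℝ :=
  ((G * ((∑ k, p.1 k) + p.2) * Gᴴ)⁻¹).trace.re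


lemma aux_vecMulVec_mulVec {n : ℕ} (u v y : Fin n → ℂ) :
    vecMulVec u v *ᵥ y = (v ⬝ᵥ y) • u := by
  ext i
  simp only [mulVec, dotProduct, vecMulVec_apply, Pi.smul_apply, smul_eq_mul, Finset.sum_mul]
  exact Finset.sum_congr rfl fun j _ => by ring

lemma aux_herm_swap {n : ℕ} {A : Matrix (Fin n) (Fin n) ℂ} (hA : A.IsHermitian)
    (x y : Fin n → ℂ) :
    star (star x ⬝ᵥ A *ᵥ y) = star y ⬝ᵥ A *ᵥ x := by
  rw [star_dotProduct, star_star, star_mulVec,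
    show Aᴴ = A from hA, ← dotProduct_mulVec]

lemma aux_quad_sum {n K : ℕ} (A : Fin K → Matrix (Fin n) (Fin n) ℂ)
    (s : Finset (Fin K)) (x y : Fin n → ℂ) :
    star x ⬝ᵥ (∑ i ∈ s, A i) *ᵥ y = ∑ i ∈ s, star x ⬝ᵥ A i *ᵥ y := by
  classical
  induction s using Finset.induction with
  | empty => simp
  | insert a s hne ih =>
    rw [Finset.sum_insert hne, Finset.sum_insert hne, add_mulVec, dotProduct_add, ih]

lemma aux_real_quad {n : ℕ} {A : Matrix (Fin n) (Fin n) ℂ} (hA : A.PosSemidef)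
    (x : Fin n → ℂ) :
    star x ⬝ᵥ A *ᵥ x = (((star x ⬝ᵥ A *ᵥ x).re : ℝ) : ℂ) := by
  have := hA.dotProduct_mulVec_nonneg x
  rw [Complex.le_def] at this
  exact Complex.ext rfl (by simpa using this.2.symm)

lemma aux_re_nonneg {n : ℕ} {A : Matrix (Fin n) (Fin n) ℂ} (hA : A.PosSemidef)
    (x : Fin n → ℂ) : 0 ≤ (star x ⬝ᵥ A *ᵥ x).re := by
  have := hA.dotProduct_mulVec_nonneg x
  rw [Complex.le_def] at this
  simpa using this.1

open scoped MatrixOrder in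
lemma aux_cs {n : ℕ} {A : Matrix (Fin n) (Fin n) ℂ} (hA : A.PosSemidef)
    (x y : Fin n → ℂ) :
    Complex.normSq (star x ⬝ᵥ A *ᵥ y) ≤ (star x ⬝ᵥ A *ᵥ x).re * (star y ⬝ᵥ A *ᵥ y).re := by
  set B := CFC.sqrt A with hBdef
  have hB := (CFC.sqrt_nonneg A).posSemidef
  have hBB : B * B = A := CFC.sqrt_mul_sqrt_self A hA.nonneg
  have key : ∀ u v : Fin n → ℂ, star u ⬝ᵥ A *ᵥ v = star (B *ᵥ u) ⬝ᵥ (B *ᵥ v) := by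
    intro u v
    rw [star_mulVec, show Bᴴ = B from hB.1, ← dotProduct_mulVec, mulVec_mulVec, hBB]
  let x' : EuclideanSpace ℂ (Fin n) := (WithLp.equiv 2 _).symm (B *ᵥ x)
  let y' : EuclideanSpace ℂ (Fin n) := (WithLp.equiv 2 _).symm (B *ᵥ y)
  have hxy : inner ℂ x' y' = star x ⬝ᵥ A *ᵥ y := by
    rw [key]; exact dotProduct_comm _ _
  have hyx : inner ℂ y' x' = star y ⬝ᵥ A *ᵥ x := by
    rw [key]; exact dotProduct_comm _ _
  have hxx : inner ℂ x' x' = star x ⬝ᵥ A *ᵥ x := by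
    rw [key]; exact dotProduct_comm _ _
  have hyy : inner ℂ y' y' = star y ⬝ᵥ A *ᵥ y := by
    rw [key]; exact dotProduct_comm _ _
  have hcs := inner_mul_inner_self_le (𝕜 := ℂ) x' y'
  rw [hxy, hyx, hxx, hyy] at hcs
  rw [← aux_herm_swap hA.1 x y, norm_star] at hcs
  calc Complex.normSq (star x ⬝ᵥ A *ᵥ y)
      = ‖star x ⬝ᵥ A *ᵥ y‖ * ‖star x ⬝ᵥ A *ᵥ y‖ := by
        rw [← Complex.sq_norm]; ring
    _ ≤ _ := hcs

/-- Proposition 1: the SDR of the Type-I transmit beamforming problem is tight.  If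
`(W̃, R̃)` minimizes the CRB objective over the relaxed set, then the rank-one
reconstruction `(W*, R*)` is feasible for the rank-constrained problem and attains
the same objective value; hence the two problems have the same optimal value. -/
theorem sdr_tight_typeI {M N K : ℕ} (G : Matrix (Fin N) (Fin M) ℂ)
    (h : Fin K → Fin M → ℂ) (Γ σsq : Fin K → ℝ) (P0 : ℝ)
    (hΓ : ∀ k, 0 < Γ k) (hσ : ∀ k, 0 < σsq k) (hP : 0 < P0)
    (Wt : Fin K → Matrix (Fin M) (Fin M) ℂ) (Rt : Matrix (Fin M) (Fin M) ℂ)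
    (hfeas : (Wt, Rt) ∈ SSDRTypeI h Γ σsq P0)
    (hmin : ∀ p ∈ SSDRTypeI h Γ σsq P0, crbObj G (Wt, Rt) ≤ crbObj G p)
    (hinv : IsUnit (G * ((∑ k, Wt k) + Rt) * Gᴴ)) :
    let w : Fin K → Fin M → ℂ := fun k =>
      (((Real.sqrt ((star (h k) ⬝ᵥ Wt k *ᵥ h k).re))⁻¹ : ℝ) : ℂ) • (Wt k *ᵥ h k)
    let Wstar : Fin K → Matrix (Fin M) (Fin M) ℂ := fun k => vecMulVec (w k) (star (w k))
    let Rstar : Matrix (Fin M) (Fin M) ℂ := Rt + ∑ k, (Wt k - Wstar k)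
    (Wstar, Rstar) ∈ SRankOneTypeI h Γ σsq P0 ∧
      crbObj G (Wstar, Rstar) = crbObj G (Wt, Rt) ∧
      sInf (crbObj G '' SRankOneTypeI h Γ σsq P0) =
        sInf (crbObj G '' SSDRTypeI h Γ σsq P0) := by
  intro w Wstar Rstar
  simp only [SSDRTypeI, Set.mem_setOf_eq] at hfeas
  obtain ⟨hW, hR, hs, hp⟩ := hfeas
  -- notation
  set t : Fin K → ℝ := fun k => (Real.sqrt ((star (h k) ⬝ᵥ Wt k *ᵥ h k).re))⁻¹ with htdef
  have haW : ∀ k, star (h k) ⬝ᵥ Wt k *ᵥ h k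
      = (((star (h k) ⬝ᵥ Wt k *ᵥ h k).re : ℝ) : ℂ) := fun k => aux_real_quad (hW k) (h k)
  -- positivity of the SINR numerator
  have hapos : ∀ k, 0 < (star (h k) ⬝ᵥ Wt k *ᵥ h k).re := by
    intro k
    have h1 := hs k
    rw [Complex.le_def] at h1
    have h1r := h1.1
    have hS1 : 0 ≤ (∑ i ∈ Finset.univ.erase k, star (h k) ⬝ᵥ Wt i *ᵥ h k).re := by
      rw [Complex.re_sum]
      exact Finset.sum_nonneg fun i _ => aux_re_nonneg (hW i) (h k)
    have hS2 : 0 ≤ (star (h k) ⬝ᵥ Rt *ᵥ h k).re := aux_re_nonneg hR (h k)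
    have hmul : ((1 / (Γ k : ℂ)) * (star (h k) ⬝ᵥ Wt k *ᵥ h k)).re
        = (1 / Γ k) * (star (h k) ⬝ᵥ Wt k *ᵥ h k).re := by
      rw [haW k]
      have : (1 / (Γ k : ℂ)) * ((((star (h k) ⬝ᵥ Wt k *ᵥ h k).re : ℝ)) : ℂ)
          = (((1 / Γ k) * (star (h k) ⬝ᵥ Wt k *ᵥ h k).re : ℝ) : ℂ) := by
        push_cast; ring
      rw [this, Complex.ofReal_re, Complex.ofReal_re]
    rw [Complex.sub_re, Complex.sub_re, Complex.ofReal_re, hmul] at h1r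
    have h1Γ : 0 < 1 / Γ k := by
      rw [one_div]; exact inv_pos.mpr (hΓ k)
    nlinarith [hσ k, hΓ k]
  have ht2 : ∀ k, (t k) ^ 2 * (star (h k) ⬝ᵥ Wt k *ᵥ h k).re = 1 := by
    intro k
    have : (t k) ^ 2 = ((star (h k) ⬝ᵥ Wt k *ᵥ h k).re)⁻¹ := by
      rw [htdef]
      simp only []
      rw [← Real.sqrt_inv]
      exact Real.sq_sqrt (inv_nonneg.mpr (le_of_lt (hapos k)))
    rw [this, inv_mul_cancel₀ (ne_of_gt (hapos k))]
  -- dot products with w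
  have hxdot : ∀ k (x : Fin M → ℂ),
      star x ⬝ᵥ w k = ((t k : ℝ) : ℂ) * (star x ⬝ᵥ Wt k *ᵥ h k) := by
    intro k x
    simp only [w, htdef]
    rw [dotProduct_smul, smul_eq_mul]
  have hwdot : ∀ k (y : Fin M → ℂ),
      star (w k) ⬝ᵥ y = ((t k : ℝ) : ℂ) * (star (h k) ⬝ᵥ Wt k *ᵥ y) := by
    intro k y
    simp only [w, htdef]
    rw [star_smul, star_mulVec, Complex.star_def, Complex.conj_ofReal,
      smul_dotProduct, smul_eq_mul, show (Wt k)ᴴ = Wt k from (hW k).1, ← dotProduct_mulVec]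
  -- quadratic form of Wstar
  have hQ : ∀ k (x y : Fin M → ℂ),
      star x ⬝ᵥ Wstar k *ᵥ y
        = ((t k : ℝ) : ℂ) ^ 2 * ((star x ⬝ᵥ Wt k *ᵥ h k) * (star (h k) ⬝ᵥ Wt k *ᵥ y)) := by
    intro k x y
    simp only [Wstar]
    rw [aux_vecMulVec_mulVec, dotProduct_smul, smul_eq_mul, hwdot, hxdot]
    ring
  -- Wstar is Hermitian / PSD
  have hWsH : ∀ k, (Wstar k).IsHermitian := by
    intro k
    show (vecMulVec (w k) (star (w k)))ᴴ = vecMulVec (w k) (star (w k))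
    ext i j
    simp [vecMulVec_apply, conjTranspose_apply, mul_comm]
  have hWsPSD : ∀ k, (Wstar k).PosSemidef := by
    intro k
    refine .of_dotProduct_mulVec_nonneg (hWsH k) fun x => ?_
    rw [hQ k x x, ← aux_herm_swap (hW k).1 x (h k)]
    have h1 : (0 : ℂ) ≤ (star x ⬝ᵥ Wt k *ᵥ h k) * star (star x ⬝ᵥ Wt k *ᵥ h k) :=
      mul_star_self_nonneg _
    have h2 : (0 : ℂ) ≤ ((t k : ℝ) : ℂ) ^ 2 := by
      rw [show ((t k : ℝ) : ℂ) ^ 2 = (((t k ^ 2 : ℝ)) : ℂ) by push_cast; ring]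
      exact_mod_cast sq_nonneg (t k)
    exact mul_nonneg h2 h1
  -- Wt - Wstar is PSD
  have hdiff : ∀ k, (Wt k - Wstar k).PosSemidef := by
    intro k
    refine .of_dotProduct_mulVec_nonneg ((hW k).1.sub (hWsH k)) fun x => ?_
    rw [sub_mulVec, dotProduct_sub, hQ k x x, ← aux_herm_swap (hW k).1 x (h k)]
    have hcs := aux_cs (hW k) x (h k)
    have hrw : star x ⬝ᵥ Wt k *ᵥ x
          - ((t k : ℝ) : ℂ) ^ 2 * ((star x ⬝ᵥ Wt k *ᵥ h k) * star (star x ⬝ᵥ Wt k *ᵥ h k))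
        = ((((star x ⬝ᵥ Wt k *ᵥ x).re
            - t k ^ 2 * Complex.normSq (star x ⬝ᵥ Wt k *ᵥ h k) : ℝ)) : ℂ) := by
      rw [Complex.star_def, Complex.mul_conj]
      conv_lhs => rw [aux_real_quad (hW k) x]
      push_cast; ring
    rw [hrw]
    rw [Complex.zero_le_real]
    have h1 : t k ^ 2 * Complex.normSq (star x ⬝ᵥ Wt k *ᵥ h k)
        ≤ t k ^ 2 * ((star x ⬝ᵥ Wt k *ᵥ x).re * (star (h k) ⬝ᵥ Wt k *ᵥ h k).re) :=
      mul_le_mul_of_nonneg_left hcs (sq_nonneg _)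
    have h2 : t k ^ 2 * ((star x ⬝ᵥ Wt k *ᵥ x).re * (star (h k) ⬝ᵥ Wt k *ᵥ h k).re)
        = (star x ⬝ᵥ Wt k *ᵥ x).re := by
      rw [show t k ^ 2 * ((star x ⬝ᵥ Wt k *ᵥ x).re * (star (h k) ⬝ᵥ Wt k *ᵥ h k).re)
          = (star x ⬝ᵥ Wt k *ᵥ x).re * (t k ^ 2 * (star (h k) ⬝ᵥ Wt k *ᵥ h k).re) by ring,
        ht2 k, mul_one]
    linarith
  -- the rank-one reconstruction preserves the "numerator" quadratic form
  have hWst : ∀ k, star (h k) ⬝ᵥ Wstar k *ᵥ h k = star (h k) ⬝ᵥ Wt k *ᵥ h k := by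
    intro k
    rw [hQ k (h k) (h k)]
    rw [haW k]
    rw [show ((t k : ℝ) : ℂ) ^ 2
          * (((((star (h k) ⬝ᵥ Wt k *ᵥ h k).re : ℝ)) : ℂ)
            * ((((star (h k) ⬝ᵥ Wt k *ᵥ h k).re : ℝ)) : ℂ))
        = (((t k ^ 2 * (star (h k) ⬝ᵥ Wt k *ᵥ h k).re)
            * (star (h k) ⬝ᵥ Wt k *ᵥ h k).re : ℝ) : ℂ) by push_cast; ring]
    rw [ht2 k, one_mul]
  -- total transmit covariance is unchanged
  have hSum : (∑ k, Wstar k) + Rstar = (∑ k, Wt k) + Rt := by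
    simp only [Rstar]
    rw [Finset.sum_sub_distrib]
    abel
  -- Rstar PSD
  have hRsPSD : Rstar.PosSemidef := by
    have hsum : (∑ k, (Wt k - Wstar k)).PosSemidef := by
      refine Finset.sum_induction _ Matrix.PosSemidef
        (fun A B hA hB => hA.add hB) Matrix.PosSemidef.zero (fun k _ => hdiff k)
    exact hR.add hsum
  -- SINR expressions unchanged
  have hRsq : ∀ k, star (h k) ⬝ᵥ Rstar *ᵥ h k
      = star (h k) ⬝ᵥ Rt *ᵥ h k
        + ∑ i, (star (h k) ⬝ᵥ Wt i *ᵥ h k - star (h k) ⬝ᵥ Wstar i *ᵥ h k) := by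
    intro k
    simp only [Rstar]
    rw [add_mulVec, dotProduct_add, aux_quad_sum]
    congr 1
    exact Finset.sum_congr rfl fun i _ => by rw [sub_mulVec, dotProduct_sub]
  have hsinrNew : ∀ k,
      (1 / (Γ k : ℂ)) * (star (h k) ⬝ᵥ Wstar k *ᵥ h k)
        - ∑ i ∈ Finset.univ.erase k, star (h k) ⬝ᵥ Wstar i *ᵥ h k
        - star (h k) ⬝ᵥ Rstar *ᵥ h k
      = (1 / (Γ k : ℂ)) * (star (h k) ⬝ᵥ Wt k *ᵥ h k)
        - ∑ i ∈ Finset.univ.erase k, star (h k) ⬝ᵥ Wt i *ᵥ h k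
        - star (h k) ⬝ᵥ Rt *ᵥ h k := by
    intro k
    rw [hRsq k, hWst k, Finset.sum_sub_distrib,
      ← Finset.add_sum_erase _ (fun i => star (h k) ⬝ᵥ Wt i *ᵥ h k) (Finset.mem_univ k),
      ← Finset.add_sum_erase _ (fun i => star (h k) ⬝ᵥ Wstar i *ᵥ h k) (Finset.mem_univ k),
      hWst k]
    ring
  -- power unchanged
  have htr : (∑ k, (Wstar k).trace) + Rstar.trace = (∑ k, (Wt k).trace) + Rt.trace := by
    rw [← trace_sum, ← trace_add, hSum, trace_add, trace_sum]
  -- feasibility of (Wstar, Rstar) in the SDR set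
  have hfeas' : (Wstar, Rstar) ∈ SSDRTypeI h Γ σsq P0 := by
    refine ⟨hWsPSD, hRsPSD, fun k => ?_, ?_⟩
    · rw [show ((Wstar, Rstar) : (Fin K → Matrix (Fin M) (Fin M) ℂ)
          × Matrix (Fin M) (Fin M) ℂ).1 = Wstar from rfl]
      rw [show ((Wstar, Rstar) : (Fin K → Matrix (Fin M) (Fin M) ℂ)
          × Matrix (Fin M) (Fin M) ℂ).2 = Rstar from rfl]
      rw [hsinrNew k]
      exact hs k
    · rw [show ((Wstar, Rstar) : (Fin K → Matrix (Fin M) (Fin M) ℂ)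
          × Matrix (Fin M) (Fin M) ℂ).1 = Wstar from rfl]
      rw [show ((Wstar, Rstar) : (Fin K → Matrix (Fin M) (Fin M) ℂ)
          × Matrix (Fin M) (Fin M) ℂ).2 = Rstar from rfl]
      rw [htr]
      exact hp
  -- rank-one property
  have hrank : ∀ k, (Wstar k).rank ≤ 1 := by
    intro k
    have : Wstar k = replicateCol (Fin 1) (w k) * replicateRow (Fin 1) (star (w k)) := vecMulVec_eq (Fin 1) _ _
    rw [this]
    exact (rank_mul_le_left _ _).trans ((rank_le_card_width _).trans (by simp))
  have hmem1 : (Wstar, Rstar) ∈ SRankOneTypeI h Γ σsq P0 := ⟨hfeas', hrank⟩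
  -- objective equality
  have hobj : crbObj G (Wstar, Rstar) = crbObj G (Wt, Rt) := by
    simp only [crbObj]
    rw [hSum]
  refine ⟨hmem1, hobj, ?_⟩
  -- optimal values coincide
  have hmemSDR : (Wt, Rt) ∈ SSDRTypeI h Γ σsq P0 := ⟨hW, hR, hs, hp⟩
  have hlbSDR : ∀ y ∈ crbObj G '' SSDRTypeI h Γ σsq P0, crbObj G (Wt, Rt) ≤ y := by
    rintro y ⟨p, hpmem, rfl⟩
    exact hmin p hpmem
  have hsub : SRankOneTypeI h Γ σsq P0 ⊆ SSDRTypeI h Γ σsq P0 := fun p hp => hp.1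
  have hlb1 : ∀ y ∈ crbObj G '' SRankOneTypeI h Γ σsq P0, crbObj G (Wt, Rt) ≤ y := by
    rintro y ⟨p, hpmem, rfl⟩
    exact hmin p (hsub hpmem)
  have hm1 : crbObj G (Wt, Rt) ∈ crbObj G '' SRankOneTypeI h Γ σsq P0 :=
    ⟨(Wstar, Rstar), hmem1, hobj⟩
  have hm2 : crbObj G (Wt, Rt) ∈ crbObj G '' SSDRTypeI h Γ σsq P0 :=
    ⟨(Wt, Rt), hmemSDR, rfl⟩
  have e1 : sInf (crbObj G '' SRankOneTypeI h Γ σsq P0) = crbObj G (Wt, Rt) :=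
    le_antisymm (csInf_le ⟨_, hlb1⟩ hm1) (le_csInf ⟨_, hm1⟩ hlb1)
  have e2 : sInf (crbObj G '' SSDRTypeI h Γ σsq P0) = crbObj G (Wt, Rt) :=
    le_antisymm (csInf_le ⟨_, hlbSDR⟩ hm2) (le_csInf ⟨_, hm2⟩ hlbSDR)
  rw [e1, e2]
end

section
/- Fix G ∈ ℂ^{N×M}, h ∈ ℂ^M, Γ > 0, σ² > 0, P_0 > 0. Define F_I as the set of pairs (W, R) of Hermitian positive semidefinite M×M matrices with (1/Γ) h^H W h − h^H R h ≥ σ² and tr(W) + tr(R) ≤ P_0, and F_II as the set of such pairs with (1/Γ) h^H W h ≥ σ² and tr(W) + tr(R) ≤ P_0. Let f(W, R) = tr((G(W + R)G^H)^{-1}) be defined on pairs for which G(W + R)G^H is invertible. Then the infimum of f over {(W, R) ∈ F_I : G(W+R)G^H invertible} equals the infimum of f over {(W, R) ∈ F_II : G(W+R)G^H invertible}. -/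
open Matrix ComplexOrder

/-- Proposition 3 at the level of the semidefinite relaxations with a single CU:
the relaxed Type-I problem (SDR1.2) and the relaxed Type-II problem (SDR2.1)
achieve the same optimal CRB-related objective value. -/
theorem single_user_typeI_eq_typeII {M N : ℕ} (G : Matrix (Fin N) (Fin M) ℂ)
    (h : Fin M → ℂ) (Γ σsq P0 : ℝ) (hΓ : 0 < Γ) (hσ : 0 < σsq) (hP : 0 < P0) :
    let FI : Set (Matrix (Fin M) (Fin M) ℂ × Matrix (Fin M) (Fin M) ℂ) :=
      {p | p.1.PosSemidef ∧ p.2.PosSemidef ∧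
        (σsq : ℂ) ≤ (1 / (Γ : ℂ)) * (star h ⬝ᵥ p.1 *ᵥ h) - star h ⬝ᵥ p.2 *ᵥ h ∧
        p.1.trace + p.2.trace ≤ (P0 : ℂ)}
    let FII : Set (Matrix (Fin M) (Fin M) ℂ × Matrix (Fin M) (Fin M) ℂ) :=
      {p | p.1.PosSemidef ∧ p.2.PosSemidef ∧
        (σsq : ℂ) ≤ (1 / (Γ : ℂ)) * (star h ⬝ᵥ p.1 *ᵥ h) ∧
        p.1.trace + p.2.trace ≤ (P0 : ℂ)}
    let f : Matrix (Fin M) (Fin M) ℂ × Matrix (Fin M) (Fin M) ℂ → ℝ :=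
      fun p => ((G * (p.1 + p.2) * Gᴴ)⁻¹).trace.re
    sInf (f '' {p ∈ FI | IsUnit (G * (p.1 + p.2) * Gᴴ)}) =
      sInf (f '' {p ∈ FII | IsUnit (G * (p.1 + p.2) * Gᴴ)}) := by
  intro FI FII f
  have hΓinv : (0 : ℂ) ≤ 1 / (Γ : ℂ) := by
    rw [show (1 / (Γ : ℂ)) = ((1 / Γ : ℝ) : ℂ) by push_cast; ring]
    rw [Complex.zero_le_real]
    positivity
  congr 1
  ext y
  constructor
  · rintro ⟨p, ⟨⟨hW, hR, hc, ht⟩, hu⟩, rfl⟩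
    refine ⟨p, ⟨⟨hW, hR, ?_, ht⟩, hu⟩, rfl⟩
    have hq : (0 : ℂ) ≤ star h ⬝ᵥ p.2 *ᵥ h := hR.dotProduct_mulVec_nonneg h
    calc (σsq : ℂ) ≤ (1 / (Γ : ℂ)) * (star h ⬝ᵥ p.1 *ᵥ h) - star h ⬝ᵥ p.2 *ᵥ h := hc
      _ ≤ (1 / (Γ : ℂ)) * (star h ⬝ᵥ p.1 *ᵥ h) := sub_le_self _ hq
  · rintro ⟨p, ⟨⟨hW, hR, hc, ht⟩, hu⟩, rfl⟩
    refine ⟨(p.1 + p.2, 0), ⟨⟨hW.add hR, Matrix.PosSemidef.zero, ?_, ?_⟩, ?_⟩, ?_⟩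
    · simp only [Matrix.zero_mulVec, dotProduct_zero, sub_zero, Matrix.add_mulVec,
        dotProduct_add, mul_add]
      have hq : (0 : ℂ) ≤ (1 / (Γ : ℂ)) * (star h ⬝ᵥ p.2 *ᵥ h) :=
        mul_nonneg hΓinv (hR.dotProduct_mulVec_nonneg h)
      calc (σsq : ℂ) ≤ (1 / (Γ : ℂ)) * (star h ⬝ᵥ p.1 *ᵥ h) := hc
        _ ≤ _ := le_add_of_nonneg_right hq
    · simpa [Matrix.trace_add] using ht
    · simpa using hu
    · simp [f]
end
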